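/- arXiv:2412.08225 — 6 statements merged into one kernel-verified Lean document; each statement's English description precedes it below -/
import Mathlib

section
/- For a bivariate Gaussian possibility function with block decomposition θ = (θ₁, θ₂), mean (μ₁, μ₂), and covariance blocks Σ₁₁, Σ₁₂, Σ₂₁, Σ₂₂, the conditional possibility function f(θ₁ | θ₂) = f(θ₁, θ₂) / sup_{θ₁'} f(θ₁', θ₂) is Gaussian with mean μ₁ + Σ₁₂Σ₂₂⁻¹(θ₂ - μ₂) and covariance Σ₁₁ - Σ₁₂Σ₂₂⁻¹Σ₂₁. -/
open Real Matrix

theorem aux_dp {k l : ℕ} (M : Matrix (Fin k) (Fin l) ℝ) (y : Fin l → ℝ) (v : Fin k → ℝ) :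
    (M *ᵥ y) ⬝ᵥ v = y ⬝ᵥ (Mᵀ *ᵥ v) := by
  rw [dotProduct_mulVec, vecMul_transpose, dotProduct_comm]

theorem aux_S22_posdef {n m : ℕ} (S₁₁ : Matrix (Fin n) (Fin n) ℝ) (S₁₂ : Matrix (Fin n) (Fin m) ℝ)
    (S₂₁ : Matrix (Fin m) (Fin n) ℝ) (S₂₂ : Matrix (Fin m) (Fin m) ℝ)
    (hS : (Matrix.fromBlocks S₁₁ S₁₂ S₂₁ S₂₂).PosDef) : S₂₂.PosDef := by
  obtain ⟨hH, hpos⟩ := posDef_iff_dotProduct_mulVec.mp hS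
  obtain ⟨h11, hBC, hCB, h22⟩ := isHermitian_fromBlocks_iff.mp hH
  refine posDef_iff_dotProduct_mulVec.mpr ⟨h22, fun y hy => ?_⟩
  have hz : Sum.elim (0 : Fin n → ℝ) y ≠ 0 := by
    intro h; apply hy; funext i; exact congrFun h (Sum.inr i)
  have := hpos hz
  simpa [fromBlocks_mulVec, sumElim_dotProduct_sumElim] using this

theorem aux_schur_posdef {n m : ℕ} (S₁₁ : Matrix (Fin n) (Fin n) ℝ) (S₁₂ : Matrix (Fin n) (Fin m) ℝ)
    (S₂₁ : Matrix (Fin m) (Fin n) ℝ) (S₂₂ : Matrix (Fin m) (Fin m) ℝ)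
    (hS : (Matrix.fromBlocks S₁₁ S₁₂ S₂₁ S₂₂).PosDef) (h22 : S₂₂.PosDef) :
    (S₁₁ - S₁₂ * S₂₂⁻¹ * S₂₁).PosDef := by
  haveI := h22.isUnit.invertible
  obtain ⟨hH, hpos⟩ := posDef_iff_dotProduct_mulVec.mp hS
  obtain ⟨h11, hBC, hCB, h22'⟩ := isHermitian_fromBlocks_iff.mp hH
  subst hBC
  refine posDef_iff_dotProduct_mulVec.mpr ⟨?_, ?_⟩
  · exact ((Matrix.IsHermitian.fromBlocks₂₂ S₁₁ S₁₂ h22').mp hH)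
  · intro x hx
    have key := Matrix.schur_complement_eq₂₂ S₁₁ S₁₂ x (-((S₂₂⁻¹ * S₁₂ᴴ) *ᵥ x)) (hD := h22')
    have hz : Sum.elim x (-((S₂₂⁻¹ * S₁₂ᴴ) *ᵥ x)) ≠ 0 := by
      intro h; apply hx; funext i; exact congrFun h (Sum.inl i)
    have := hpos hz
    rw [dotProduct_mulVec, key] at this
    simpa [dotProduct_mulVec] using this

theorem aux_inv_eq {n m : ℕ} (S₁₁ : Matrix (Fin n) (Fin n) ℝ) (S₁₂ : Matrix (Fin n) (Fin m) ℝ)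
    (S₂₁ : Matrix (Fin m) (Fin n) ℝ) (S₂₂ : Matrix (Fin m) (Fin m) ℝ)
    (hS : (Matrix.fromBlocks S₁₁ S₁₂ S₂₁ S₂₂).PosDef) (h22 : S₂₂.PosDef)
    (hSch : (S₁₁ - S₁₂ * S₂₂⁻¹ * S₂₁).PosDef) :
    (Matrix.fromBlocks S₁₁ S₁₂ S₂₁ S₂₂)⁻¹ =
      Matrix.fromBlocks ((S₁₁ - S₁₂ * S₂₂⁻¹ * S₂₁)⁻¹)
        (-((S₁₁ - S₁₂ * S₂₂⁻¹ * S₂₁)⁻¹ * S₁₂ * S₂₂⁻¹))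
        (-(S₂₂⁻¹ * S₂₁ * (S₁₁ - S₁₂ * S₂₂⁻¹ * S₂₁)⁻¹))
        (S₂₂⁻¹ + S₂₂⁻¹ * S₂₁ * (S₁₁ - S₁₂ * S₂₂⁻¹ * S₂₁)⁻¹ * S₁₂ * S₂₂⁻¹) := by
  haveI := h22.isUnit.invertible
  haveI := hS.isUnit.invertible
  haveI : Invertible (S₁₁ - S₁₂ * ⅟S₂₂ * S₂₁) := by
    rw [invOf_eq_nonsing_inv]; exact hSch.isUnit.invertible
  rw [← invOf_eq_nonsing_inv, invOf_fromBlocks₂₂_eq]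
  simp only [invOf_eq_nonsing_inv]

theorem aux_quad {n m : ℕ} (S₁₁ : Matrix (Fin n) (Fin n) ℝ) (S₁₂ : Matrix (Fin n) (Fin m) ℝ)
    (S₂₁ : Matrix (Fin m) (Fin n) ℝ) (S₂₂ : Matrix (Fin m) (Fin m) ℝ)
    (hS : (Matrix.fromBlocks S₁₁ S₁₂ S₂₁ S₂₂).PosDef) (h22 : S₂₂.PosDef)
    (hSch : (S₁₁ - S₁₂ * S₂₂⁻¹ * S₂₁).PosDef)
    (x : Fin n → ℝ) (y : Fin m → ℝ) :
    Sum.elim x y ⬝ᵥ ((Matrix.fromBlocks S₁₁ S₁₂ S₂₁ S₂₂)⁻¹ *ᵥ Sum.elim x y) =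
      (x - S₁₂ *ᵥ (S₂₂⁻¹ *ᵥ y)) ⬝ᵥ ((S₁₁ - S₁₂ * S₂₂⁻¹ * S₂₁)⁻¹ *ᵥ (x - S₁₂ *ᵥ (S₂₂⁻¹ *ᵥ y)))
        + y ⬝ᵥ (S₂₂⁻¹ *ᵥ y) := by
  have hinv := aux_inv_eq S₁₁ S₁₂ S₂₁ S₂₂ hS h22 hSch
  obtain ⟨hH, _⟩ := hS
  obtain ⟨h11, hBC, hCB, h22'⟩ := isHermitian_fromBlocks_iff.mp hH
  set K := (S₁₁ - S₁₂ * S₂₂⁻¹ * S₂₁)⁻¹ with hKdef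
  have hBt : S₁₂ᵀ = S₂₁ := by simpa using hBC
  have h22t : (S₂₂⁻¹)ᵀ = S₂₂⁻¹ := by simpa using h22'.inv.eq
  have hKt : Kᵀ = K := by simpa using hSch.1.inv.eq
  rw [hinv]
  simp only [fromBlocks_mulVec, sumElim_dotProduct_sumElim, mulVec_mulVec,
    neg_mulVec, add_mulVec, dotProduct_neg, dotProduct_add, mulVec_sub, sub_mulVec,
    dotProduct_sub, sub_dotProduct, aux_dp, transpose_mul, hBt, h22t, hKt, Matrix.mul_assoc,
    Sum.elim_comp_inl, Sum.elim_comp_inr]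
  ring

/-- Conditioning a bivariate Gaussian possibility function yields a Gaussian possibility
function with mean `μ₁ + Σ₁₂ Σ₂₂⁻¹ (θ₂ - μ₂)` and covariance `Σ₁₁ - Σ₁₂ Σ₂₂⁻¹ Σ₂₁`. -/
theorem gaussian_possibility_conditional (n m : ℕ)
    (μ₁ : Fin n → ℝ) (μ₂ : Fin m → ℝ)
    (S₁₁ : Matrix (Fin n) (Fin n) ℝ) (S₁₂ : Matrix (Fin n) (Fin m) ℝ)
    (S₂₁ : Matrix (Fin m) (Fin n) ℝ) (S₂₂ : Matrix (Fin m) (Fin m) ℝ)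
    (hS : (Matrix.fromBlocks S₁₁ S₁₂ S₂₁ S₂₂).PosDef)
    (f : (Fin n → ℝ) → (Fin m → ℝ) → ℝ)
    (hf : ∀ θ₁ θ₂, f θ₁ θ₂ =
      Real.exp (-(1 / 2) *
        ((Sum.elim (θ₁ - μ₁) (θ₂ - μ₂)) ⬝ᵥ
          ((Matrix.fromBlocks S₁₁ S₁₂ S₂₁ S₂₂)⁻¹ *ᵥ Sum.elim (θ₁ - μ₁) (θ₂ - μ₂))))) :
    ∀ θ₂ θ₁, f θ₁ θ₂ / (⨆ θ₁' : Fin n → ℝ, f θ₁' θ₂) =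
      Real.exp (-(1 / 2) *
        ((θ₁ - (μ₁ + S₁₂ *ᵥ (S₂₂⁻¹ *ᵥ (θ₂ - μ₂)))) ⬝ᵥ
          ((S₁₁ - S₁₂ * S₂₂⁻¹ * S₂₁)⁻¹ *ᵥ
            (θ₁ - (μ₁ + S₁₂ *ᵥ (S₂₂⁻¹ *ᵥ (θ₂ - μ₂))))))) := by
  intro θ₂ θ₁
  have h22 := aux_S22_posdef S₁₁ S₁₂ S₂₁ S₂₂ hS
  have hSch := aux_schur_posdef S₁₁ S₁₂ S₂₁ S₂₂ hS h22
  set K := (S₁₁ - S₁₂ * S₂₂⁻¹ * S₂₁)⁻¹ with hKdef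
  set y := θ₂ - μ₂ with hy
  set c := y ⬝ᵥ (S₂₂⁻¹ *ᵥ y) with hc
  -- the quadratic part, as a function of θ₁'
  set q : (Fin n → ℝ) → ℝ := fun θ₁' =>
    (θ₁' - (μ₁ + S₁₂ *ᵥ (S₂₂⁻¹ *ᵥ y))) ⬝ᵥ (K *ᵥ (θ₁' - (μ₁ + S₁₂ *ᵥ (S₂₂⁻¹ *ᵥ y)))) with hq
  have hfq : ∀ θ₁', f θ₁' θ₂ = Real.exp (-(1 / 2) * (q θ₁' + c)) := by
    intro θ₁'
    rw [hf, aux_quad S₁₁ S₁₂ S₂₁ S₂₂ hS h22 hSch]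
    simp only [hq, sub_sub, hc]
    rfl
  have hqnonneg : ∀ θ₁', 0 ≤ q θ₁' := by
    intro θ₁'
    have := hSch.inv.posSemidef.dotProduct_mulVec_nonneg (θ₁' - (μ₁ + S₁₂ *ᵥ (S₂₂⁻¹ *ᵥ y)))
    simpa [hq] using this
  have hq0 : q (μ₁ + S₁₂ *ᵥ (S₂₂⁻¹ *ᵥ y)) = 0 := by simp [hq]
  have hbound : ∀ θ₁', f θ₁' θ₂ ≤ Real.exp (-(1 / 2) * c) := by
    intro θ₁'
    rw [hfq]
    apply Real.exp_le_exp.2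
    nlinarith [hqnonneg θ₁']
  have hsup : (⨆ θ₁' : Fin n → ℝ, f θ₁' θ₂) = Real.exp (-(1 / 2) * c) := by
    apply le_antisymm
    · exact ciSup_le hbound
    · have hba : BddAbove (Set.range fun θ₁' => f θ₁' θ₂) := by
        refine ⟨Real.exp (-(1 / 2) * c), ?_⟩
        rintro _ ⟨θ₁', rfl⟩
        exact hbound θ₁'
      have := le_ciSup hba (μ₁ + S₁₂ *ᵥ (S₂₂⁻¹ *ᵥ y))
      rwa [hfq, hq0, zero_add] at this
  rw [hsup, hfq, ← Real.exp_sub]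
  congr 1
  ring
end

section
/- The marginal of a multivariate Gaussian possibility function over a subset of components, obtained by taking the supremum over the remaining components, is again a Gaussian possibility function with the corresponding sub-vector of the mean and sub-matrix of the covariance. -/
open Real Matrix

lemma blockPosDef₁₁ {n m : Type*} [Fintype n] [Fintype m]
    (M : Matrix (n ⊕ m) (n ⊕ m) ℝ) (h : M.PosDef) : M.toBlocks₁₁.PosDef := by
  rw [posDef_iff_dotProduct_mulVec]
  constructor
  · ext i j
    have := congrFun (congrFun h.1 (Sum.inl i)) (Sum.inl j)
    simpa [Matrix.conjTranspose, Matrix.toBlocks₁₁] using this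
  · intro x hx
    have hx' : Sum.elim x (0 : m → ℝ) ≠ 0 := by
      intro hc
      apply hx
      funext i
      exact congrFun hc (Sum.inl i)
    have := h.dotProduct_mulVec_pos hx'
    rw [← Matrix.fromBlocks_toBlocks M] at this
    simpa [Matrix.fromBlocks_mulVec, dotProduct] using this

lemma blockPosDef₂₂ {n m : Type*} [Fintype n] [Fintype m]
    (M : Matrix (n ⊕ m) (n ⊕ m) ℝ) (h : M.PosDef) : M.toBlocks₂₂.PosDef := by
  rw [posDef_iff_dotProduct_mulVec]
  constructor
  · ext i j
    have := congrFun (congrFun h.1 (Sum.inr i)) (Sum.inr j)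
    simpa [Matrix.conjTranspose, Matrix.toBlocks₂₂] using this
  · intro x hx
    have hx' : Sum.elim (0 : n → ℝ) x ≠ 0 := by
      intro hc
      apply hx
      funext i
      exact congrFun hc (Sum.inr i)
    have := h.dotProduct_mulVec_pos hx'
    rw [← Matrix.fromBlocks_toBlocks M] at this
    simpa [Matrix.fromBlocks_mulVec, dotProduct] using this

/-- The marginal (via supremum) of a multivariate Gaussian possibility function is again
Gaussian, with the corresponding sub-vector of the mean and sub-matrix of the covariance. -/
theorem gaussian_possibility_marginal (n m : ℕ)
    (μ₁ : Fin n → ℝ) (μ₂ : Fin m → ℝ)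
    (S₁₁ : Matrix (Fin n) (Fin n) ℝ) (S₁₂ : Matrix (Fin n) (Fin m) ℝ)
    (S₂₁ : Matrix (Fin m) (Fin n) ℝ) (S₂₂ : Matrix (Fin m) (Fin m) ℝ)
    (hS : (Matrix.fromBlocks S₁₁ S₁₂ S₂₁ S₂₂).PosDef) :
    ∀ θ₂ : Fin m → ℝ,
      (⨆ θ₁ : Fin n → ℝ,
        Real.exp (-(1 / 2) *
          ((Sum.elim (θ₁ - μ₁) (θ₂ - μ₂)) ⬝ᵥ
            ((Matrix.fromBlocks S₁₁ S₁₂ S₂₁ S₂₂)⁻¹ *ᵥ Sum.elim (θ₁ - μ₁) (θ₂ - μ₂))))) =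
      Real.exp (-(1 / 2) * ((θ₂ - μ₂) ⬝ᵥ (S₂₂⁻¹ *ᵥ (θ₂ - μ₂)))) := by
  intro θ₂
  set Sg : Matrix (Fin n ⊕ Fin m) (Fin n ⊕ Fin m) ℝ := Matrix.fromBlocks S₁₁ S₁₂ S₂₁ S₂₂ with hSg
  have hΛ : Sg⁻¹.PosDef := hS.inv
  set Λ := Sg⁻¹ with hΛdef
  set A := Λ.toBlocks₁₁ with hAdef
  set B := Λ.toBlocks₁₂ with hBdef
  set C := Λ.toBlocks₂₁ with hCdef
  set D := Λ.toBlocks₂₂ with hDdef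
  have hΛB : Λ = Matrix.fromBlocks A B C D := (Matrix.fromBlocks_toBlocks Λ).symm
  have hA : A.PosDef := blockPosDef₁₁ Λ hΛ
  have hS22 : S₂₂.PosDef := blockPosDef₂₂ Sg hS
  haveI : Invertible A := hA.isUnit.invertible
  have hherm : A.IsHermitian ∧ Bᴴ = C ∧ Cᴴ = B ∧ D.IsHermitian := by
    rw [← Matrix.isHermitian_fromBlocks_iff, ← hΛB]
    exact hΛ.1
  have hCB : C = Bᴴ := hherm.2.1.symm
  -- Schur complement equals S₂₂⁻¹
  have hSL : Sg * Λ = 1 := Matrix.mul_nonsing_inv Sg (Matrix.isUnit_iff_isUnit_det Sg |>.1 hS.isUnit)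
  rw [hSg, hΛB, Matrix.fromBlocks_multiply, ← Matrix.fromBlocks_one] at hSL
  have h21 : S₂₁ * A + S₂₂ * C = 0 := by
    have := congrArg Matrix.toBlocks₂₁ hSL
    rwa [Matrix.toBlocks_fromBlocks₂₁, Matrix.toBlocks_fromBlocks₂₁] at this
  have h22 : S₂₁ * B + S₂₂ * D = 1 := by
    have := congrArg Matrix.toBlocks₂₂ hSL
    rwa [Matrix.toBlocks_fromBlocks₂₂, Matrix.toBlocks_fromBlocks₂₂] at this
  have hSchur : D - Bᴴ * A⁻¹ * B = S₂₂⁻¹ := by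
    symm
    apply Matrix.inv_eq_right_inv
    have hC'' : S₂₂ * Bᴴ = -(S₂₁ * A) := by
      rw [← hCB]
      exact eq_neg_of_add_eq_zero_right h21
    calc S₂₂ * (D - Bᴴ * A⁻¹ * B)
        = S₂₂ * D - (S₂₂ * Bᴴ) * (A⁻¹ * B) := by simp [Matrix.mul_sub, Matrix.mul_assoc]
      _ = S₂₂ * D + (S₂₁ * (A * A⁻¹)) * B := by rw [hC'']; simp [Matrix.mul_assoc, sub_neg_eq_add]
      _ = S₂₂ * D + S₂₁ * B := by rw [Matrix.mul_inv_of_invertible, Matrix.mul_one]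
      _ = 1 := by rw [← h22]; exact add_comm _ _
  set y : Fin m → ℝ := θ₂ - μ₂ with hy
  set c : ℝ := y ⬝ᵥ (S₂₂⁻¹ *ᵥ y) with hc
  have key : ∀ θ₁ : Fin n → ℝ,
      Sum.elim (θ₁ - μ₁) y ⬝ᵥ (Λ *ᵥ Sum.elim (θ₁ - μ₁) y) =
        ((θ₁ - μ₁) + (A⁻¹ * B) *ᵥ y) ⬝ᵥ (A *ᵥ ((θ₁ - μ₁) + (A⁻¹ * B) *ᵥ y)) + c := by
    intro θ₁
    have := Matrix.schur_complement_eq₁₁ (A := A) B D (θ₁ - μ₁) y hA.1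
    rw [hΛB, hCB]
    rw [Matrix.dotProduct_mulVec, Matrix.dotProduct_mulVec]
    simp only [star_trivial] at this
    rw [this, hSchur, hc, Matrix.dotProduct_mulVec]
  have hbound : ∀ θ₁ : Fin n → ℝ,
      Real.exp (-(1 / 2) * (Sum.elim (θ₁ - μ₁) y ⬝ᵥ (Λ *ᵥ Sum.elim (θ₁ - μ₁) y))) ≤
        Real.exp (-(1 / 2) * c) := by
    intro θ₁
    apply Real.exp_le_exp.mpr
    have hr : 0 ≤ ((θ₁ - μ₁) + (A⁻¹ * B) *ᵥ y) ⬝ᵥ (A *ᵥ ((θ₁ - μ₁) + (A⁻¹ * B) *ᵥ y)) := by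
      simpa using hA.posSemidef.dotProduct_mulVec_nonneg ((θ₁ - μ₁) + (A⁻¹ * B) *ᵥ y)
    rw [key θ₁]
    nlinarith
  have hval : Real.exp (-(1 / 2) *
      (Sum.elim ((μ₁ - (A⁻¹ * B) *ᵥ y) - μ₁) y ⬝ᵥ (Λ *ᵥ Sum.elim ((μ₁ - (A⁻¹ * B) *ᵥ y) - μ₁) y)))
      = Real.exp (-(1 / 2) * c) := by
    rw [key (μ₁ - (A⁻¹ * B) *ᵥ y)]
    congr 2
    have : (μ₁ - (A⁻¹ * B) *ᵥ y) - μ₁ + (A⁻¹ * B) *ᵥ y = 0 := by abel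
    rw [this]
    simp
  apply le_antisymm
  · exact ciSup_le hbound
  · have hbdd : BddAbove (Set.range fun θ₁ : Fin n → ℝ =>
        Real.exp (-(1 / 2) * (Sum.elim (θ₁ - μ₁) y ⬝ᵥ (Λ *ᵥ Sum.elim (θ₁ - μ₁) y)))) := by
      refine ⟨Real.exp (-(1 / 2) * c), ?_⟩
      rintro z ⟨θ₁, rfl⟩
      exact hbound θ₁
    calc Real.exp (-(1 / 2) * c)
        = Real.exp (-(1 / 2) * (Sum.elim ((μ₁ - (A⁻¹ * B) *ᵥ y) - μ₁) y ⬝ᵥ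
            (Λ *ᵥ Sum.elim ((μ₁ - (A⁻¹ * B) *ᵥ y) - μ₁) y))) := hval.symm
      _ ≤ _ := le_ciSup hbdd (μ₁ - (A⁻¹ * B) *ᵥ y)
end

section
/- If θ is described by a Gaussian possibility function N̄(μ, Σ) on ℝⁿ and F ∈ ℝ^{N×n} has full row rank, then the uncertain variable Fθ, described via the change-of-variables rule f_{Fθ}(φ) = sup{f(θ) : Fθ = φ}, has possibilistic covariance matrix F Σ Fᵀ. -/
open Real Matrix

private lemma dot_symm' {m : ℕ} (M : Matrix (Fin m) (Fin m) ℝ) (hM : Mᵀ = M)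
    (a b : Fin m → ℝ) : a ⬝ᵥ (M *ᵥ b) = b ⬝ᵥ (M *ᵥ a) := by
  rw [Matrix.dotProduct_mulVec]
  nth_rewrite 1 [← hM]
  rw [Matrix.vecMul_transpose, dotProduct_comm]

/-- If `θ` is described by the Gaussian possibility function `N̄(μ, Σ)` and `F` has full row
rank, then the uncertain variable `Fθ` (described via the supremum change-of-variables rule)
is Gaussian with mean `Fμ` and possibilistic covariance `F Σ Fᵀ`. -/
theorem gaussian_possibility_linear_image (n N : ℕ) (μ : Fin n → ℝ)
    (S : Matrix (Fin n) (Fin n) ℝ) (hS : S.PosDef)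
    (F : Matrix (Fin N) (Fin n) ℝ) (hF : F.rank = N) :
    ∀ φ : Fin N → ℝ,
      sSup ((fun θ : Fin n → ℝ =>
          Real.exp (-(1 / 2) * ((θ - μ) ⬝ᵥ (S⁻¹ *ᵥ (θ - μ))))) ''
        {θ : Fin n → ℝ | F *ᵥ θ = φ}) =
      Real.exp (-(1 / 2) *
        ((φ - F *ᵥ μ) ⬝ᵥ ((F * S * Fᵀ)⁻¹ *ᵥ (φ - F *ᵥ μ)))) := by
  intro φ
  have hST : Sᵀ = S := hS.1
  have hSdet : IsUnit S.det := isUnit_iff_ne_zero.2 hS.det_pos.ne'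
  -- surjectivity of `F *ᵥ ·`
  have hsurj : Function.Surjective (F.mulVec) := by
    have h : LinearMap.range F.mulVecLin = ⊤ := by
      apply Submodule.eq_top_of_finrank_eq
      rw [← Matrix.rank, hF, Module.finrank_pi]; simp
    exact fun y => LinearMap.range_eq_top.mp h y
  -- injectivity of `Fᵀ *ᵥ ·`
  have hTinj : ∀ x : Fin N → ℝ, Fᵀ *ᵥ x = 0 → x = 0 := by
    intro x hx
    obtain ⟨y, hy⟩ := hsurj x
    have hz : x ⬝ᵥ x = 0 := by
      calc x ⬝ᵥ x = x ⬝ᵥ (F *ᵥ y) := by rw [hy]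
        _ = (x ᵥ* F) ⬝ᵥ y := Matrix.dotProduct_mulVec _ _ _
        _ = (Fᵀ *ᵥ x) ⬝ᵥ y := by rw [Matrix.mulVec_transpose]
        _ = 0 := by rw [hx, zero_dotProduct]
    exact dotProduct_self_eq_zero.mp hz
  -- `F * S * Fᵀ` is positive definite
  have hA : (F * S * Fᵀ).PosDef := by
    refine Matrix.PosDef.of_dotProduct_mulVec_pos ?_ ?_
    · show (F * S * Fᵀ)ᵀ = F * S * Fᵀ
      rw [Matrix.transpose_mul, Matrix.transpose_mul, Matrix.transpose_transpose, hST,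
        ← Matrix.mul_assoc]
    · intro x hx
      have key : x ⬝ᵥ ((F * S * Fᵀ) *ᵥ x) = (Fᵀ *ᵥ x) ⬝ᵥ (S *ᵥ (Fᵀ *ᵥ x)) := by
        rw [← Matrix.mulVec_mulVec, ← Matrix.mulVec_mulVec,
          Matrix.dotProduct_mulVec x F, ← Matrix.mulVec_transpose]
      have hne : Fᵀ *ᵥ x ≠ 0 := fun h => hx (hTinj x h)
      simpa [key] using hS.dotProduct_mulVec_pos hne
  set A := F * S * Fᵀ with hAdef
  have hAdet : IsUnit A.det := isUnit_iff_ne_zero.2 hA.det_pos.ne'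
  have hAinv : A * A⁻¹ = 1 := Matrix.mul_nonsing_inv _ hAdet
  set d := φ - F *ᵥ μ with hd
  set u := A⁻¹ *ᵥ d with hu
  set w := Fᵀ *ᵥ u with hw
  set θs := μ + S *ᵥ w with hθs
  have cross : ∀ (u' : Fin N → ℝ) (y : Fin n → ℝ),
      (Fᵀ *ᵥ u') ⬝ᵥ y = u' ⬝ᵥ (F *ᵥ y) := by
    intro u' y
    rw [Matrix.mulVec_transpose, ← Matrix.dotProduct_mulVec]
  -- θs is feasible
  have hFθs : F *ᵥ θs = φ := by
    rw [hθs, Matrix.mulVec_add, Matrix.mulVec_mulVec, hw, Matrix.mulVec_mulVec, hu,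
      Matrix.mulVec_mulVec, ← hAdef, hAinv, Matrix.one_mulVec, hd]
    abel
  have hsub : θs - μ = S *ᵥ w := by rw [hθs]; abel
  have hSinvS : ∀ y : Fin n → ℝ, S⁻¹ *ᵥ (S *ᵥ y) = y := by
    intro y
    rw [Matrix.mulVec_mulVec, Matrix.nonsing_inv_mul _ hSdet, Matrix.one_mulVec]
  -- value at θs
  have hval : (θs - μ) ⬝ᵥ (S⁻¹ *ᵥ (θs - μ)) = d ⬝ᵥ (A⁻¹ *ᵥ d) := by
    rw [hsub, hSinvS, dotProduct_comm, hw, cross, Matrix.mulVec_mulVec,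
      Matrix.mulVec_mulVec, ← hAdef, hu, Matrix.mulVec_mulVec, hAinv,
      Matrix.one_mulVec, dotProduct_comm]
  -- minimality
  have hmin : ∀ θ : Fin n → ℝ, F *ᵥ θ = φ →
      (θs - μ) ⬝ᵥ (S⁻¹ *ᵥ (θs - μ)) ≤ (θ - μ) ⬝ᵥ (S⁻¹ *ᵥ (θ - μ)) := by
    intro θ hθ
    have hSinvT : (S⁻¹)ᵀ = S⁻¹ := by rw [Matrix.transpose_nonsing_inv, hST]
    have hdecomp : θ - μ = (θ - θs) + (θs - μ) := by abel
    have hFv : F *ᵥ (θ - θs) = 0 := by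
      rw [Matrix.mulVec_sub, hθ, hFθs, sub_self]
    have hvw : (θ - θs) ⬝ᵥ w = 0 := by
      rw [dotProduct_comm, hw, cross, hFv, dotProduct_zero]
    have hexp : (θ - μ) ⬝ᵥ (S⁻¹ *ᵥ (θ - μ)) =
        (θ - θs) ⬝ᵥ (S⁻¹ *ᵥ (θ - θs)) + (θs - μ) ⬝ᵥ (S⁻¹ *ᵥ (θs - μ)) := by
      rw [hdecomp, Matrix.mulVec_add, dotProduct_add, add_dotProduct,
        add_dotProduct]
      have h1 : (θ - θs) ⬝ᵥ (S⁻¹ *ᵥ (θs - μ)) = 0 := by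
        rw [hsub, hSinvS, hvw]
      have h2 : (θs - μ) ⬝ᵥ (S⁻¹ *ᵥ (θ - θs)) = 0 := by
        rw [dot_symm' _ hSinvT, hsub, hSinvS, hvw]
      rw [h1, h2]; ring
    have hpos : 0 ≤ (θ - θs) ⬝ᵥ (S⁻¹ *ᵥ (θ - θs)) := by
      simpa using hS.inv.posSemidef.dotProduct_mulVec_nonneg (θ - θs)
    linarith [hexp ▸ le_refl ((θ - μ) ⬝ᵥ (S⁻¹ *ᵥ (θ - μ))), hpos, hexp.ge]
  -- conclude via IsGreatest
  apply IsGreatest.csSup_eq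
  constructor
  · refine ⟨θs, hFθs, ?_⟩
    show Real.exp (-(1 / 2) * ((θs - μ) ⬝ᵥ (S⁻¹ *ᵥ (θs - μ)))) = _
    rw [hval]
  · rintro y ⟨θ, hθ, rfl⟩
    show Real.exp (-(1 / 2) * ((θ - μ) ⬝ᵥ (S⁻¹ *ᵥ (θ - μ)))) ≤ _
    apply Real.exp_le_exp.mpr
    have h1 := hmin θ hθ
    rw [hval] at h1
    nlinarith [h1]
end

section
/- Bilinearity of possibilistic covariance: for an uncertain variable θ = (θ₁, θ₂, θ₃) described by a Gaussian possibility function with covariance matrix [c_{ij}], the uncertain variable (θ₁+θ₂, θ₃), described via the supremum change-of-variables rule, has covariance matrix [[c₁₁ + 2c₁₂ + c₂₂, c₁₃ + c₂₃],[c₁₃ + c₂₃, c₃₃]]; in particular cov*(θ₁+θ₂, θ₃) = cov*(θ₁,θ₃) + cov*(θ₂,θ₃). -/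
open Real Matrix

section Aux

set_option linter.unusedSectionVars false

variable {n m : Type*} [Fintype n] [Fintype m] [DecidableEq n] [DecidableEq m]

lemma symm_of_posDef {C : Matrix n n ℝ} (hC : C.PosDef) : Cᵀ = C := by
  have := hC.isHermitian
  rwa [Matrix.IsHermitian, conjTranspose_eq_transpose_of_trivial] at this

lemma quad_min (T : Matrix m n ℝ) (C : Matrix n n ℝ) (hC : C.PosDef)
    (hS : (T * C * Tᵀ).PosDef) (ψ : m → ℝ) (x : n → ℝ) (hx : T *ᵥ x = ψ) :
    ψ ⬝ᵥ ((T * C * Tᵀ)⁻¹ *ᵥ ψ) ≤ x ⬝ᵥ (C⁻¹ *ᵥ x) := by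
  set S := T * C * Tᵀ with hSdef
  have hCd : IsUnit C.det := hC.det_pos.ne'.isUnit
  have hSd : IsUnit S.det := hS.det_pos.ne'.isUnit
  set u : m → ℝ := S⁻¹ *ᵥ ψ with hu
  set w : n → ℝ := Tᵀ *ᵥ u with hw
  set y : n → ℝ := C *ᵥ w with hy
  set v : n → ℝ := x - y with hv
  have f1 : C⁻¹ *ᵥ y = w := by
    rw [hy, mulVec_mulVec, nonsing_inv_mul C hCd, one_mulVec]
  have f2 : T *ᵥ y = ψ := by
    rw [hy, hw, hu, mulVec_mulVec, mulVec_mulVec, mulVec_mulVec,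
      ← hSdef, mul_nonsing_inv S hSd, one_mulVec]
  have f3 : T *ᵥ v = 0 := by
    rw [hv, mulVec_sub, hx, f2, sub_self]
  have f4 : w ⬝ᵥ v = 0 := by
    rw [hw, ← vecMul_transpose, transpose_transpose, ← dotProduct_mulVec, f3,
      dotProduct_zero]
  have f5 : y ⬝ᵥ w = ψ ⬝ᵥ u := by
    rw [hw, dotProduct_mulVec, vecMul_transpose, f2]
  have hCiT : (C⁻¹)ᵀ = C⁻¹ := symm_of_posDef hC.inv
  have f6 : y ⬝ᵥ (C⁻¹ *ᵥ v) = 0 := by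
    rw [dotProduct_mulVec, ← hCiT, vecMul_transpose, f1, f4]
  have f7 : v ⬝ᵥ (C⁻¹ *ᵥ y) = 0 := by
    rw [f1, dotProduct_comm, f4]
  have f8 : 0 ≤ v ⬝ᵥ (C⁻¹ *ᵥ v) := by
    have := hC.inv.posSemidef.dotProduct_mulVec_nonneg v
    simpa using this
  have hxsplit : x = y + v := by rw [hv]; ring
  calc ψ ⬝ᵥ (S⁻¹ *ᵥ ψ) = y ⬝ᵥ (C⁻¹ *ᵥ y) := by rw [f1, f5, hu]
    _ ≤ y ⬝ᵥ (C⁻¹ *ᵥ y) + v ⬝ᵥ (C⁻¹ *ᵥ v) := le_add_of_nonneg_right f8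
    _ = x ⬝ᵥ (C⁻¹ *ᵥ x) := by
        rw [hxsplit, mulVec_add, dotProduct_add, add_dotProduct, add_dotProduct,
          f6, f7]
        abel

lemma gauss_sup (T : Matrix m n ℝ) (C : Matrix n n ℝ) (hC : C.PosDef)
    (hS : (T * C * Tᵀ).PosDef) (μ : n → ℝ) (φ : m → ℝ) :
    sSup ((fun θ : n → ℝ => Real.exp (-(1 / 2) * ((θ - μ) ⬝ᵥ (C⁻¹ *ᵥ (θ - μ))))) ''
        {θ : n → ℝ | T *ᵥ θ = φ}) =
    Real.exp (-(1 / 2) * ((φ - T *ᵥ μ) ⬝ᵥ ((T * C * Tᵀ)⁻¹ *ᵥ (φ - T *ᵥ μ)))) := by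
  set S := T * C * Tᵀ with hSdef
  have hCd : IsUnit C.det := hC.det_pos.ne'.isUnit
  have hSd : IsUnit S.det := hS.det_pos.ne'.isUnit
  set ψ : m → ℝ := φ - T *ᵥ μ with hψ
  apply IsGreatest.csSup_eq
  constructor
  · refine ⟨μ + C *ᵥ (Tᵀ *ᵥ (S⁻¹ *ᵥ ψ)), ?_, ?_⟩
    · show T *ᵥ _ = φ
      rw [mulVec_add, mulVec_mulVec, mulVec_mulVec, mulVec_mulVec,
        ← hSdef, mul_nonsing_inv S hSd, one_mulVec, hψ]
      abel
    · refine congrArg Real.exp (congrArg (fun t => -(1 / 2) * t) ?_)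
      have hdiff : μ + C *ᵥ (Tᵀ *ᵥ (S⁻¹ *ᵥ ψ)) - μ = C *ᵥ (Tᵀ *ᵥ (S⁻¹ *ᵥ ψ)) :=
        add_sub_cancel_left μ _
      rw [hdiff,
        mulVec_mulVec (Tᵀ *ᵥ (S⁻¹ *ᵥ ψ)) C⁻¹ C, nonsing_inv_mul C hCd, one_mulVec,
        dotProduct_mulVec (C *ᵥ (Tᵀ *ᵥ (S⁻¹ *ᵥ ψ))), vecMul_transpose,
        mulVec_mulVec, mulVec_mulVec, mulVec_mulVec, ← hSdef,
        mul_nonsing_inv S hSd, one_mulVec]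
  · rintro r ⟨θ, hθ, rfl⟩
    apply Real.exp_le_exp.2
    have hTθ : T *ᵥ (θ - μ) = ψ := by rw [mulVec_sub, hθ, hψ]
    have := quad_min T C hC hS ψ (θ - μ) hTθ
    rw [← hSdef] at this
    linarith

end Aux

/-- Bilinearity of the possibilistic covariance: for `θ = (θ₁, θ₂, θ₃)` described by a
Gaussian possibility function with covariance `[cᵢⱼ]`, the uncertain variable `(θ₁+θ₂, θ₃)`
is described by a Gaussian possibility function with covariance
`[[c₁₁ + 2c₁₂ + c₂₂, c₁₃ + c₂₃], [c₁₃ + c₂₃, c₃₃]]`; in particular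
`cov⋆(θ₁+θ₂, θ₃) = cov⋆(θ₁,θ₃) + cov⋆(θ₂,θ₃)`. -/
theorem possibilistic_covariance_bilinear (μ : Fin 3 → ℝ)
    (C : Matrix (Fin 3) (Fin 3) ℝ) (hC : C.PosDef) :
    ∀ φ : Fin 2 → ℝ,
      sSup ((fun θ : Fin 3 → ℝ =>
          Real.exp (-(1 / 2) * ((θ - μ) ⬝ᵥ (C⁻¹ *ᵥ (θ - μ))))) ''
        {θ : Fin 3 → ℝ | ![θ 0 + θ 1, θ 2] = φ}) =
      Real.exp (-(1 / 2) *
        ((φ - ![μ 0 + μ 1, μ 2]) ⬝ᵥ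
          ((!![C 0 0 + 2 * C 0 1 + C 1 1, C 0 2 + C 1 2;
              C 0 2 + C 1 2, C 2 2])⁻¹ *ᵥ (φ - ![μ 0 + μ 1, μ 2])))) := by
  intro φ
  set T : Matrix (Fin 2) (Fin 3) ℝ := !![1, 1, 0; 0, 0, 1] with hT
  have hTv : ∀ θ : Fin 3 → ℝ, T *ᵥ θ = ![θ 0 + θ 1, θ 2] := by
    intro θ
    funext i
    fin_cases i <;> simp [hT, mulVec, dotProduct, Fin.sum_univ_three]
  have hsymm : ∀ i j : Fin 3, C j i = C i j := by
    intro i j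
    have := congrFun (congrFun (symm_of_posDef hC) i) j
    simpa using this
  have hTCT : T * C * Tᵀ = !![C 0 0 + 2 * C 0 1 + C 1 1, C 0 2 + C 1 2;
      C 0 2 + C 1 2, C 2 2] := by
    ext i j
    fin_cases i <;> fin_cases j <;>
      simp [hT, Matrix.mul_apply, Matrix.transpose_apply, Matrix.vecMul,
        dotProduct, Matrix.vecHead, Matrix.vecTail, Fin.sum_univ_three,
        Fin.sum_univ_two, hsymm 0 1, hsymm 0 2, hsymm 1 2] <;>
      ring
  have hTtinj : ∀ y : Fin 2 → ℝ, Tᵀ *ᵥ y = 0 → y = 0 := by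
    intro y hy
    funext i
    have h0 := congrFun hy 0
    have h2 := congrFun hy 2
    fin_cases i
    · simpa [hT, mulVec, dotProduct, Fin.sum_univ_two] using h0
    · simpa [hT, mulVec, dotProduct, Fin.sum_univ_two] using h2
  have hS : (T * C * Tᵀ).PosDef := by
    apply Matrix.PosDef.of_dotProduct_mulVec_pos
    · rw [Matrix.IsHermitian, conjTranspose_eq_transpose_of_trivial,
        Matrix.transpose_mul, Matrix.transpose_mul, transpose_transpose,
        symm_of_posDef hC, Matrix.mul_assoc]
    · intro y hy
      have hy' : Tᵀ *ᵥ y ≠ 0 := fun h => hy (hTtinj y h)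
      have hpos := hC.dotProduct_mulVec_pos hy'
      rw [star_trivial] at hpos
      have e : (Tᵀ *ᵥ y) ⬝ᵥ (C *ᵥ (Tᵀ *ᵥ y)) = y ⬝ᵥ ((T * C * Tᵀ) *ᵥ y) := by
        rw [mulVec_mulVec, dotProduct_mulVec, vecMul_mulVec, transpose_transpose,
          dotProduct_mulVec y, Matrix.mul_assoc]
      rw [star_trivial]
      rw [e] at hpos
      exact hpos
  have hset : {θ : Fin 3 → ℝ | ![θ 0 + θ 1, θ 2] = φ} = {θ : Fin 3 → ℝ | T *ᵥ θ = φ} := by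
    ext θ
    simp [hTv θ]
  rw [hset, ← hTCT, ← hTv μ]
  exact gauss_sup T C hC hS μ φ
end

section
/- The supremum over θ ∈ ℝ of the product of two univariate Gaussian possibility functions N̄(θ; μ₁, σ₁²) · N̄(θ; μ₂, σ₂²) equals exp(-(μ₁ - μ₂)²/(2(σ₁² + σ₂²))). -/
open Real

/-- The supremum over `θ` of the product of two univariate Gaussian possibility functions
`N̄(θ; μ₁, σ₁²) · N̄(θ; μ₂, σ₂²)` equals `exp (-(μ₁ - μ₂)² / (2(σ₁² + σ₂²)))`. -/
theorem sup_prod_gaussian_possibility (μ₁ μ₂ σ₁ σ₂ : ℝ) (hσ₁ : 0 < σ₁) (hσ₂ : 0 < σ₂) :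
    (⨆ θ : ℝ, Real.exp (-(θ - μ₁) ^ 2 / (2 * σ₁ ^ 2)) *
        Real.exp (-(θ - μ₂) ^ 2 / (2 * σ₂ ^ 2))) =
      Real.exp (-(μ₁ - μ₂) ^ 2 / (2 * (σ₁ ^ 2 + σ₂ ^ 2))) := by
  have h1 : (0:ℝ) < σ₁ ^ 2 := by positivity
  have h2 : (0:ℝ) < σ₂ ^ 2 := by positivity
  have hs : (0:ℝ) < σ₁ ^ 2 + σ₂ ^ 2 := by positivity
  set f : ℝ → ℝ := fun θ => Real.exp (-(θ - μ₁) ^ 2 / (2 * σ₁ ^ 2)) *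
        Real.exp (-(θ - μ₂) ^ 2 / (2 * σ₂ ^ 2)) with hf
  have key : ∀ θ : ℝ, f θ ≤ Real.exp (-(μ₁ - μ₂) ^ 2 / (2 * (σ₁ ^ 2 + σ₂ ^ 2))) := by
    intro θ
    rw [hf]
    simp only
    rw [← Real.exp_add, Real.exp_le_exp]
    rw [div_add_div _ _ (by positivity) (by positivity),
      div_le_div_iff₀ (by positivity) (by positivity)]
    nlinarith [sq_nonneg ((σ₁ ^ 2 + σ₂ ^ 2) * θ - (σ₂ ^ 2 * μ₁ + σ₁ ^ 2 * μ₂)),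
      sq_nonneg (σ₁ * σ₂), mul_pos h1 h2]
  apply le_antisymm (ciSup_le key)
  have hval : f ((σ₂ ^ 2 * μ₁ + σ₁ ^ 2 * μ₂) / (σ₁ ^ 2 + σ₂ ^ 2)) =
      Real.exp (-(μ₁ - μ₂) ^ 2 / (2 * (σ₁ ^ 2 + σ₂ ^ 2))) := by
    rw [hf]
    simp only
    rw [← Real.exp_add]
    congr 1
    field_simp
    ring
  rw [← hval]
  exact le_ciSup ⟨_, Set.forall_mem_range.2 key⟩ _
end

section
/- Necessity of correct classification in possibilistic multiclass softmax classification: with independent latent variables θ_l described by N̄(μ_l, σ_l²) for labels l ∈ L, and l* the label with strictly largest μ_l, the possibility of the event {∃ l ≠ l*: θ_l ≥ θ_{l*}} equals max_{l≠l*} exp(-(μ_{l*} - μ_l)²/(2(σ_{l*}² + σ_l²))). -/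
open Real

lemma quad_ineq {a b : ℝ} (ha : 0 < a) (hb : 0 < b) {x y m1 m2 : ℝ}
    (hxy : x ≤ y) (hm : m2 ≤ m1) :
    (m1 - m2)^2 / (2*(a+b)) ≤ (x - m1)^2/(2*a) + (y - m2)^2/(2*b) := by
  rw [div_add_div _ _ (by positivity) (by positivity),
    div_le_div_iff₀ (by positivity) (by positivity)]
  nlinarith [sq_nonneg (b*(x-m1) + a*(y-m2)), mul_pos ha hb, sq_nonneg (x-y),
    mul_nonneg (mul_nonneg ha.le hb.le)
      (mul_nonneg (sub_nonneg.mpr hxy) (sub_nonneg.mpr hm))]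

/-- Necessity of correct classification for possibilistic multiclass softmax classification:
with independent latent variables `θ l` described by `N̄(μ l, (σ l)²)` and `l⋆` the label
with strictly largest mean, the possibility of the event `{∃ l ≠ l⋆, θ l ≥ θ l⋆}` equals
`max_{l ≠ l⋆} exp (-(μ l⋆ - μ l)² / (2((σ l⋆)² + (σ l)²)))`. -/
theorem necessity_multiclass_classification (L : Type*) [Fintype L]
    (μ σ : L → ℝ) (hσ : ∀ l, 0 < σ l) (lstar : L)
    (hmax : ∀ l, l ≠ lstar → μ l < μ lstar) :
    sSup ((fun θ : L → ℝ => ∏ l, Real.exp (-(θ l - μ l) ^ 2 / (2 * (σ l) ^ 2))) ''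
        {θ : L → ℝ | ∃ l, l ≠ lstar ∧ θ lstar ≤ θ l}) =
      ⨆ l ∈ {l : L | l ≠ lstar},
        Real.exp (-(μ lstar - μ l) ^ 2 / (2 * ((σ lstar) ^ 2 + (σ l) ^ 2))) := by
  classical
  haveI : Nonempty L := ⟨lstar⟩
  set F : (L → ℝ) → L → ℝ :=
    fun θ l => Real.exp (-(θ l - μ l) ^ 2 / (2 * (σ l) ^ 2)) with hF
  set f : (L → ℝ) → ℝ := fun θ => ∏ l, F θ l with hf
  set g : L → ℝ :=
    fun l => Real.exp (-(μ lstar - μ l) ^ 2 / (2 * ((σ lstar) ^ 2 + (σ l) ^ 2))) with hg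
  set E : Set (L → ℝ) := {θ : L → ℝ | ∃ l, l ≠ lstar ∧ θ lstar ≤ θ l} with hE
  have hσ2 : ∀ l, (0:ℝ) < (σ l)^2 := fun l => pow_pos (hσ l) 2
  have hFle1 : ∀ θ l, F θ l ≤ 1 := by
    intro θ l
    simp only [hF]
    apply Real.exp_le_one_iff.mpr
    apply div_nonpos_of_nonpos_of_nonneg (neg_nonpos.mpr (sq_nonneg _))
    exact (mul_pos two_pos (hσ2 l)).le
  have hFpos : ∀ θ l, 0 < F θ l := fun θ l => Real.exp_pos _
  have hfle1 : ∀ θ, f θ ≤ 1 := fun θ =>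
    Finset.prod_le_one (fun l _ => (hFpos θ l).le) (fun l _ => hFle1 θ l)
  have hbddS : BddAbove (f '' E) := by
    refine ⟨1, ?_⟩
    rintro x ⟨θ, _, rfl⟩
    exact hfle1 θ
  have hupper : ∀ θ ∈ E, ∀ l, l ≠ lstar → θ lstar ≤ θ l → f θ ≤ g l := by
    intro θ _ l hl hθ
    have hsplit : f θ = (∏ l' ∈ ({lstar, l} : Finset L), F θ l') *
        ∏ l' ∈ ({lstar, l} : Finset L)ᶜ, F θ l' :=
      (Finset.prod_mul_prod_compl _ _).symm
    have hcompl : (∏ l' ∈ ({lstar, l} : Finset L)ᶜ, F θ l') ≤ 1 :=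
      Finset.prod_le_one (fun l' _ => (hFpos θ l').le) (fun l' _ => hFle1 θ l')
    have hpair : (∏ l' ∈ ({lstar, l} : Finset L), F θ l') = F θ lstar * F θ l :=
      Finset.prod_pair (Ne.symm hl)
    have h1 : f θ ≤ F θ lstar * F θ l := by
      rw [hsplit, hpair]
      exact mul_le_of_le_one_right (mul_pos (hFpos θ lstar) (hFpos θ l)).le hcompl
    refine h1.trans ?_
    simp only [hF, hg, ← Real.exp_add]
    apply Real.exp_le_exp.mpr
    have hq := quad_ineq (a := (σ lstar)^2) (b := (σ l)^2)
      (hσ2 lstar) (hσ2 l) hθ (hmax l hl).le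
    have e1 : -(θ lstar - μ lstar) ^ 2 / (2 * σ lstar ^ 2)
        = -((θ lstar - μ lstar) ^ 2 / (2 * σ lstar ^ 2)) := by ring
    have e2 : -(θ l - μ l) ^ 2 / (2 * σ l ^ 2)
        = -((θ l - μ l) ^ 2 / (2 * σ l ^ 2)) := by ring
    have e3 : -(μ lstar - μ l) ^ 2 / (2 * (σ lstar ^ 2 + σ l ^ 2))
        = -((μ lstar - μ l) ^ 2 / (2 * (σ lstar ^ 2 + σ l ^ 2))) := by ring
    rw [e1, e2, e3]
    linarith [hq]
  have hgpos : ∀ l, 0 < g l := fun l => Real.exp_pos _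
  have hbddR : BddAbove (Set.range fun l => ⨆ _ : l ∈ {l : L | l ≠ lstar}, g l) :=
    (Set.finite_range _).bddAbove
  have hRHSnonneg : (0:ℝ) ≤ ⨆ l ∈ {l : L | l ≠ lstar}, g l := by
    apply Real.iSup_nonneg
    intro l
    exact Real.iSup_nonneg (fun _ => (hgpos l).le)
  by_cases hex : ∃ l : L, l ≠ lstar
  · have hwit : ∀ l, l ≠ lstar → g l ∈ f '' E := by
      intro l hl
      set t : ℝ := (μ lstar * (σ l)^2 + μ l * (σ lstar)^2) / ((σ lstar)^2 + (σ l)^2) with ht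
      set θ : L → ℝ := fun l' => if l' = lstar then t else if l' = l then t else μ l' with hθ
      have hθstar : θ lstar = t := by simp [hθ]
      have hθl : θ l = t := by simp [hθ, hl]
      refine ⟨θ, ⟨l, hl, by rw [hθstar, hθl]⟩, ?_⟩
      have hsplit : f θ = (∏ l' ∈ ({lstar, l} : Finset L), F θ l') *
          ∏ l' ∈ ({lstar, l} : Finset L)ᶜ, F θ l' :=
        (Finset.prod_mul_prod_compl _ _).symm
      have hcompl : (∏ l' ∈ ({lstar, l} : Finset L)ᶜ, F θ l') = 1 := by
        apply Finset.prod_eq_one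
        intro l' hl'
        simp only [Finset.mem_compl, Finset.mem_insert, Finset.mem_singleton, not_or] at hl'
        have hθl' : θ l' = μ l' := by simp [hθ, hl'.1, hl'.2]
        simp [hF, hθl']
      have hpair : (∏ l' ∈ ({lstar, l} : Finset L), F θ l') = F θ lstar * F θ l :=
        Finset.prod_pair (Ne.symm hl)
      rw [hsplit, hcompl, mul_one, hpair]
      simp only [hF, hg, hθstar, hθl, ← Real.exp_add]
      congr 1
      have ha : ((σ lstar)^2 : ℝ) ≠ 0 := (hσ2 lstar).ne'
      have hb : ((σ l)^2 : ℝ) ≠ 0 := (hσ2 l).ne'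
      have hab : ((σ lstar)^2 + (σ l)^2 : ℝ) ≠ 0 := by positivity
      rw [ht]
      have hs1 : σ lstar ≠ 0 := (hσ lstar).ne'
      have hs2 : σ l ≠ 0 := (hσ l).ne'
      field_simp
      ring
    apply le_antisymm
    · apply Real.sSup_le _ hRHSnonneg
      rintro x ⟨θ, hθE, rfl⟩
      obtain ⟨l, hl, hle⟩ := hθE
      refine (hupper θ ⟨l, hl, hle⟩ l hl hle).trans ?_
      refine le_ciSup_of_le hbddR l ?_
      rw [ciSup_pos (show l ∈ {l' : L | l' ≠ lstar} from hl)]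
    · apply ciSup_le
      intro l
      by_cases hl : l ∈ {l : L | l ≠ lstar}
      · rw [ciSup_pos hl]
        exact le_csSup hbddS (hwit l hl)
      · haveI : IsEmpty (l ∈ {l : L | l ≠ lstar}) := by
          simp only [Set.mem_setOf_eq]
          exact ⟨fun h => hl h⟩
        rw [Real.iSup_of_isEmpty]
        obtain ⟨l₀, hl₀⟩ := hex
        exact (hgpos l₀).le.trans (le_csSup hbddS (hwit l₀ hl₀))
  · have hEempty : E = ∅ := by
      rw [hE]
      ext θ
      simp only [Set.mem_setOf_eq, Set.mem_empty_iff_false, iff_false, not_exists]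
      rintro l ⟨hl, _⟩
      exact hex ⟨l, hl⟩
    rw [hEempty, Set.image_empty, Real.sSup_empty]
    symm
    apply le_antisymm
    · apply ciSup_le
      intro l
      haveI : IsEmpty (l ∈ {l : L | l ≠ lstar}) := by
        simp only [Set.mem_setOf_eq]
        exact ⟨fun h => hex ⟨l, h⟩⟩
      rw [Real.iSup_of_isEmpty]
    · exact hRHSnonneg
end
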